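/- Let E be an equivalence relation on Cantor space represented by a swap-closed triple tree T. Then for all X, Y ∈ 2^ω: X E Y if and only if for every countable ordinal α (that is, every ordinal α < ω₁), rk(T̂_{X,Y}) ≥ α. In other words, E = ⋂_{α < ω₁} E_α, where X E_α Y iff rk(T̂_{X,Y}) ≥ α. -/

import Mathlib

open MeasureTheory

/-- Cantor space `2^ω`. -/
abbrev Cantor : Type := ℕ → Bool

/-- Triples `(σ, s, τ)` of finite sequences: `σ, τ` Boolean-valued, `s` natural-number valued. -/
abbrev Trip : Type := List Bool × List ℕ × List Bool

/-- A *triple tree*: a set of equal-length triples of finite sequences which is prefix-closed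
(simultaneously restricting all three coordinates to a common shorter length stays in the set). -/
def IsTripleTree (T : Set Trip) : Prop :=
  (∀ p ∈ T, p.2.1.length = p.1.length ∧ p.2.2.length = p.1.length) ∧
  (∀ p ∈ T, ∀ n : ℕ, (p.1.take n, p.2.1.take n, p.2.2.take n) ∈ T)

/-- The restriction `X↾n` of `X : 2^ω` to its first `n` values, as a finite sequence. -/
def res (X : Cantor) (n : ℕ) : List Bool := (List.range n).map X

/-- `T` represents the relation `E` on Cantor space: `X E Y` iff there is `f : ℕ → ℕ`
with `(X↾n, f↾n, Y↾n) ∈ T` for every `n`. -/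
def Represents (T : Set Trip) (E : Set (Cantor × Cantor)) : Prop :=
  ∀ X Y : Cantor,
    (X, Y) ∈ E ↔ ∃ f : ℕ → ℕ, ∀ n : ℕ, (res X n, (List.range n).map f, res Y n) ∈ T

/-- A triple tree is swap-closed if `(σ, s, τ) ∈ T ↔ (τ, s, σ) ∈ T`. -/
def SwapClosed (T : Set Trip) : Prop :=
  ∀ (σ : List Bool) (s : List ℕ) (τ : List Bool), (σ, s, τ) ∈ T ↔ (τ, s, σ) ∈ T

/-- Nodes of the trees `T^k_{X,Y}`: a node of length `n` is a tuple
`(s₁, t₁, s₂, t₂, …, t_{k-1}, s_k)` with each `sᵢ ∈ ℕ^n`, `tⱼ ∈ Bool^n`, encoded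
"transposed", as a list of length `n` whose `m`-th entry collects the `m`-th values
`((s₁ m, …, s_k m), (t₁ m, …, t_{k-1} m))`. -/
abbrev KNode : Type := List (List ℕ × List Bool)

/-- The sequence `s_{i+1} ∈ ℕ^n` (for `0 ≤ i < k`) encoded in a node `u`. -/
def col1 (u : KNode) (i : ℕ) : List ℕ := u.map fun e => e.1.getD i 0

/-- The sequence `t_{j+1} ∈ Bool^n` (for `0 ≤ j < k-1`) encoded in a node `u`. -/
def col2 (u : KNode) (j : ℕ) : List Bool := u.map fun e => e.2.getD j false

/-- The `i`-th boundary sequence (`0 ≤ i ≤ k`): `X↾n` for `i = 0`, `Y↾n` for `i = k`,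
and `t_i` for `0 < i < k`. -/
def bdry (X Y : Cantor) (k : ℕ) (u : KNode) (i : ℕ) : List Bool :=
  if i = 0 then res X u.length else if i = k then res Y u.length else col2 u (i - 1)

/-- The tree `T^k_{X,Y}`: nodes of length `n` are tuples `(s₁, t₁, …, t_{k-1}, s_k)` with
`(X↾n, s₁, t₁) ∈ T`, `(t₁, s₂, t₂) ∈ T`, …, `(t_{k-1}, s_k, Y↾n) ∈ T`. -/
def TkTree (T : Set Trip) (X Y : Cantor) (k : ℕ) : Set KNode :=
  {u | (∀ e ∈ u, e.1.length = k ∧ e.2.length = k - 1) ∧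
       ∀ i < k, (bdry X Y k u i, col1 u i, bdry X Y k u (i + 1)) ∈ T}

/-- Nodes of `T̂_{X,Y}`: the root (`none`), together with pairs `(k, u)`. -/
abbrev HatNode : Type := Option (ℕ × KNode)

/-- The tree `T̂_{X,Y}`: the disjoint union of the trees `T^k_{X,Y}` (`k ≥ 1`) with all the
roots identified: the root together with all pairs `(k, u)` with `u` a nonempty node
of `T^k_{X,Y}`. -/
def HatTree (T : Set Trip) (X Y : Cantor) : Set HatNode :=
  {p | p = none ∨ ∃ k u, p = some (k, u) ∧ 1 ≤ k ∧ u ≠ [] ∧ u ∈ TkTree T X Y k}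

/-- Proper (coordinatewise) prefix order on finite sequences. -/
def ListLt {A : Type*} (u v : List A) : Prop := u <+: v ∧ u ≠ v

/-- `HatLt p q`: the node `q` of `T̂` properly extends the node `p`: every node properly
extends the root, and `(k', u')` properly extends `(k, u)` iff `k = k'` and `u` is a proper
prefix of `u'`. -/
def HatLt : HatNode → HatNode → Prop
  | none, some _ => True
  | some (k, u), some (k', u') => k = k' ∧ ListLt u u'
  | _, none => False

/-- `RankGe S lt u α`: the rank of the node `u` in the tree `(S, lt)` is `≥ α`, defined by
transfinite recursion: for every `β < α` there is a node `v ∈ S` properly extending `u`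
(i.e. `lt u v`) whose rank is `≥ β`. -/
def RankGe {A : Type*} (S : Set A) (lt : A → A → Prop) (u : A) (α : Ordinal.{0}) : Prop :=
  ∀ β : Ordinal.{0}, β < α → ∃ v, v ∈ S ∧ lt u v ∧ RankGe S lt v β
termination_by α

/-- `rk(T̂_{X,Y}) ≥ α`: the root belongs to the tree and its rank is `≥ α`. -/
def HatRankGe (T : Set Trip) (X Y : Cantor) (α : Ordinal.{0}) : Prop :=
  none ∈ HatTree T X Y ∧ RankGe (HatTree T X Y) HatLt none α

/-- `rk(T^k_{X,Y}) ≥ α`: the root (the empty tuple) belongs to the tree and its rank is `≥ α`. -/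
def TkRankGe (T : Set Trip) (X Y : Cantor) (k : ℕ) (α : Ordinal.{0}) : Prop :=
  ([] : KNode) ∈ TkTree T X Y k ∧ RankGe (TkTree T X Y k) ListLt [] α

/-!
If `X E Y` is witnessed by `f`, the sequences `f↾n` form an infinite branch of `T¹_{X,Y}`, so
`T̂_{X,Y}` is ill-founded and has rank `≥ α` for every `α`. Conversely, `T̂_{X,Y}` has countably
many nodes, so if it were well-founded its rank would be a countable ordinal; hence rank `≥ α`
for all `α < ω₁` yields an infinite branch, which after the root lies in a single `T^k_{X,Y}`.
The limit of that branch is a sequence `X = t₀, t₁, …, t_k = Y` of points together with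
witnesses `sᵢ` showing `tᵢ E tᵢ₊₁`, and transitivity gives `X E Y`.
-/

section Rank

variable {A : Type} {S : Set A} {lt : A → A → Prop}

theorem rankGe_of_chain {g : ℕ → A} (hg : ∀ n, g n ∈ S) (hlt : ∀ n, lt (g n) (g (n + 1)))
    (α : Ordinal.{0}) (n : ℕ) : RankGe S lt (g n) α := by
  induction α using WellFoundedLT.induction generalizing n with
  | _ α ih =>
    rw [RankGe]
    exact fun β hβ => ⟨g (n + 1), hg _, hlt n, ih β hβ _⟩

theorem le_rank_of_rankGe {a : S} (ha : Acc (fun b c : S => lt c b) a) {α : Ordinal.{0}}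
    (h : RankGe S lt a α) : α ≤ ha.rank := by
  induction α using WellFoundedLT.induction generalizing a with
  | _ α ih =>
    refine le_of_forall_lt fun β hβ => ?_
    rw [RankGe] at h
    obtain ⟨v, hvS, hav, hv⟩ := h β hβ
    have hrel : lt a.1 (⟨v, hvS⟩ : S).1 := hav
    exact (ih β hβ (ha.inv hrel) hv).trans_lt (ha.rank_lt_of_rel hrel)

theorem Acc.rank_lt_omega_one {B : Type*} [Countable B] {r : B → B → Prop} {b : B}
    (hb : Acc r b) : hb.rank < Ordinal.omega 1 := by
  induction hb with
  | intro b hb ih =>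
    rw [Acc.rank_eq]
    exact Ordinal.iSup_lt_omega_one fun c => (Cardinal.isSuccLimit_omega 1).succ_lt (ih c c.2)

theorem exists_chain_of_forall_rankGe [Countable A] {a : A} (ha : a ∈ S)
    (h : ∀ α < (Cardinal.aleph 1).ord, RankGe S lt a α) :
    ∃ g : ℕ → A, (∀ n, g n ∈ S) ∧ ∀ n, lt (g n) (g (n + 1)) := by
  by_contra hno
  have hacc : Acc (fun b c : S => lt c b) ⟨a, ha⟩ := by
    by_contra hnacc
    obtain ⟨g, -, hg⟩ := not_acc_iff_exists_descending_chain.mp hnacc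
    exact hno ⟨fun n => g n, fun n => (g n).2, hg⟩
  have hsucc : Order.succ hacc.rank < (Cardinal.aleph 1).ord := by
    rw [Cardinal.ord_aleph]
    exact (Cardinal.isSuccLimit_omega 1).succ_lt hacc.rank_lt_omega_one
  exact (Order.lt_succ hacc.rank).not_ge (le_rank_of_rankGe hacc (h _ hsucc))

end Rank

section Prefix

variable {A : Type*}

theorem listLt_map_range_succ (f : ℕ → A) (n : ℕ) :
    ListLt ((List.range n).map f) ((List.range (n + 1)).map f) := by
  refine ⟨?_, fun h => by simpa using congrArg List.length h⟩
  rw [List.range_succ, List.map_append]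
  exact List.prefix_append _ _

theorem exists_map_range_eq_take_of_listLt_chain {c : ℕ → List A}
    (hc : ∀ n, ListLt (c n) (c (n + 1))) :
    ∃ ent : ℕ → A, ∀ n, (List.range n).map ent = (c n).take n := by
  have hlen : ∀ n, n ≤ (c n).length := by
    intro n
    induction n with
    | zero => exact Nat.zero_le _
    | succ n ih =>
      have hne : (c n).length ≠ (c (n + 1)).length := fun h => (hc n).2 ((hc n).1.eq_of_length h)
      have := (hc n).1.length_le
      omega
  have hmono : ∀ {m n}, m ≤ n → c m <+: c n := by
    intro m n hmn
    induction n, hmn using Nat.le_induction with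
    | base => exact List.prefix_rfl
    | succ n _ ih => exact ih.trans (hc n).1
  refine ⟨fun m => (c (m + 1))[m]'(hlen (m + 1)), fun n => List.ext_getElem (by simp [hlen n])
    fun m h₁ h₂ => ?_⟩
  simp only [List.getElem_map, List.getElem_range, List.getElem_take]
  exact (hmono (by simpa using h₁)).getElem _

end Prefix

section TkTree

variable {T : Set Trip} {X Y : Cantor} {k : ℕ}

theorem res_take (X : Cantor) (L n : ℕ) : (res X L).take n = res X (min n L) := by
  simp only [res, ← List.map_take, List.take_range]

theorem bdry_take (u : KNode) (n i : ℕ) :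
    bdry X Y k (u.take n) i = (bdry X Y k u i).take n := by
  unfold bdry
  split_ifs <;> simp [res_take, col2, List.map_take]

theorem take_mem_tkTree (hT : IsTripleTree T) {u : KNode} (hu : u ∈ TkTree T X Y k) (n : ℕ) :
    u.take n ∈ TkTree T X Y k := by
  refine ⟨fun e he => hu.1 e (List.mem_of_mem_take he), fun i hi => ?_⟩
  simpa only [bdry_take, col1, List.map_take] using hT.2 _ (hu.2 i hi) n

/-- The point `tᵢ ∈ 2^ω` along an infinite branch `ent` of `T^k_{X,Y}`, with `t₀ = X` and
`t_k = Y`. -/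
def branchPoint (X Y : Cantor) (k : ℕ) (ent : ℕ → List ℕ × List Bool) (i : ℕ) : Cantor :=
  if i = 0 then X else if i = k then Y else fun m => (ent m).2.getD (i - 1) false

theorem bdry_map_range (ent : ℕ → List ℕ × List Bool) (n i : ℕ) :
    bdry X Y k ((List.range n).map ent) i = res (branchPoint X Y k ent i) n := by
  unfold bdry branchPoint
  split_ifs <;> simp [res, col2]

theorem map_range_mem_tkTree_iff {ent : ℕ → List ℕ × List Bool} {n : ℕ} :
    (List.range n).map ent ∈ TkTree T X Y k ↔
      (∀ m < n, (ent m).1.length = k ∧ (ent m).2.length = k - 1) ∧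
      ∀ i < k, (res (branchPoint X Y k ent i) n, (List.range n).map (fun m => (ent m).1.getD i 0),
        res (branchPoint X Y k ent (i + 1)) n) ∈ T := by
  simp only [TkTree, Set.mem_ofPred_eq, List.forall_mem_map, List.mem_range, bdry_map_range, col1,
    List.map_map]
  rfl

end TkTree

section HatTree

variable {T : Set Trip} {X Y : Cantor}

theorem some_mem_hatTree_iff {k : ℕ} {u : KNode} :
    some (k, u) ∈ HatTree T X Y ↔ 1 ≤ k ∧ u ≠ [] ∧ u ∈ TkTree T X Y k := by
  simp [HatTree]

theorem exists_eq_some_of_hatLt : {p q : HatNode} → HatLt p q → ∃ k u, q = some (k, u)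
  | _, some (k, u), _ => ⟨k, u, rfl⟩
  | none, none, h => h.elim
  | some _, none, h => h.elim

theorem hatRankGe_of_branch {k : ℕ} (hk : 1 ≤ k) {ent : ℕ → List ℕ × List Bool}
    (h : ∀ n, (List.range n).map ent ∈ TkTree T X Y k) (α : Ordinal.{0}) : HatRankGe T X Y α := by
  let g : ℕ → HatNode := fun n => some (k, (List.range (n + 1)).map ent)
  have hg : ∀ n, g n ∈ HatTree T X Y := fun n =>
    some_mem_hatTree_iff.2 ⟨hk, by simp, h (n + 1)⟩
  have hlt : ∀ n, HatLt (g n) (g (n + 1)) := fun n => ⟨rfl, listLt_map_range_succ ent (n + 1)⟩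
  refine ⟨Or.inl rfl, ?_⟩
  rw [RankGe]
  exact fun β _ => ⟨g 0, hg 0, trivial, rankGe_of_chain hg hlt β 0⟩

theorem exists_tkTree_chain_of_hatTree_chain {g : ℕ → HatNode} (hg : ∀ n, g n ∈ HatTree T X Y)
    (hlt : ∀ n, HatLt (g n) (g (n + 1))) :
    ∃ k, 1 ≤ k ∧ ∃ c : ℕ → KNode, (∀ n, c n ∈ TkTree T X Y k) ∧ ∀ n, ListLt (c n) (c (n + 1)) := by
  choose K c hc using fun n => exists_eq_some_of_hatLt (hlt n)
  have hstep : ∀ n, K n = K (n + 1) ∧ ListLt (c n) (c (n + 1)) := by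
    intro n
    simpa only [hc, HatLt] using hlt (n + 1)
  have hK : ∀ n, K n = K 0 := by
    intro n
    induction n with
    | zero => rfl
    | succ n ih => rw [← (hstep n).1, ih]
  have hmem : ∀ n, 1 ≤ K n ∧ c n ∈ TkTree T X Y (K n) := fun n => by
    have := some_mem_hatTree_iff.1 (hc n ▸ hg (n + 1))
    exact ⟨this.1, this.2.2⟩
  exact ⟨K 0, (hmem 0).1, c, fun n => hK n ▸ (hmem n).2, fun n => (hstep n).2⟩

theorem exists_branch_of_hatRankGe (hT : IsTripleTree T)
    (h : ∀ α < (Cardinal.aleph 1).ord, HatRankGe T X Y α) :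
    ∃ k, 1 ≤ k ∧ ∃ ent : ℕ → List ℕ × List Bool,
      ∀ n, (List.range n).map ent ∈ TkTree T X Y k := by
  have hroot : none ∈ HatTree T X Y := Or.inl rfl
  obtain ⟨g, hg, hlt⟩ := exists_chain_of_forall_rankGe hroot fun α hα => (h α hα).2
  obtain ⟨k, hk, c, hc, hclt⟩ := exists_tkTree_chain_of_hatTree_chain hg hlt
  obtain ⟨ent, hent⟩ := exists_map_range_eq_take_of_listLt_chain hclt
  exact ⟨k, hk, ent, fun n => hent n ▸ take_mem_tkTree hT (hc n) n⟩

end HatTree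

theorem Equivalence.rel_zero_of_forall_rel_succ {β : Type*} {r : β → β → Prop}
    (hr : Equivalence r) {f : ℕ → β} {k : ℕ} (h : ∀ i < k, r (f i) (f (i + 1))) :
    r (f 0) (f k) := by
  induction k with
  | zero => exact hr.refl _
  | succ k ih => exact hr.trans (ih fun i hi => h i (by omega)) (h k k.lt_succ_self)

theorem statement10_general (E : Set (Cantor × Cantor)) (T : Set Trip)
    (hT : IsTripleTree T) (hrep : Represents T E)
    (hE : Equivalence fun X Y : Cantor => (X, Y) ∈ E) :
    ∀ X Y : Cantor,
      (X, Y) ∈ E ↔ ∀ α : Ordinal.{0}, α < (Cardinal.aleph 1).ord → HatRankGe T X Y α := by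
  intro X Y
  constructor
  · intro hXY α _
    obtain ⟨f, hf⟩ := (hrep X Y).1 hXY
    refine hatRankGe_of_branch le_rfl (ent := fun m => ([f m], [])) (fun n => ?_) α
    refine map_range_mem_tkTree_iff.2 ⟨by simp, fun i hi => ?_⟩
    obtain rfl : i = 0 := by omega
    simpa [branchPoint] using hf n
  · intro h
    obtain ⟨k, hk, ent, hent⟩ := exists_branch_of_hatRankGe hT h
    have hsteps : ∀ i < k, (branchPoint X Y k ent i, branchPoint X Y k ent (i + 1)) ∈ E :=
      fun i hi => (hrep _ _).2 ⟨_, fun n => (map_range_mem_tkTree_iff.1 (hent n)).2 i hi⟩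
    simpa [branchPoint, show k ≠ 0 by omega] using hE.rel_zero_of_forall_rel_succ hsteps

/-- If an equivalence relation `E` on Cantor space is represented by a
swap-closed triple tree `T`, then for all `X, Y ∈ 2^ω`: `X E Y` iff for every countable
ordinal `α` (i.e. every `α < ω₁`), `rk(T̂_{X,Y}) ≥ α`; that is, `E = ⋂_{α < ω₁} E_α` where
`X E_α Y ↔ rk(T̂_{X,Y}) ≥ α`. -/
theorem statement10 (E : Set (Cantor × Cantor)) (T : Set Trip)
    (hT : IsTripleTree T) (hswap : SwapClosed T) (hrep : Represents T E)
    (hE : Equivalence fun X Y : Cantor => (X, Y) ∈ E) :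
    ∀ X Y : Cantor,
      (X, Y) ∈ E ↔ ∀ α : Ordinal.{0}, α < (Cardinal.aleph 1).ord → HatRankGe T X Y α :=
  statement10_general E T hT hrep hE
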